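/- arXiv:0808.3581 — 6 statements merged into one kernel-verified Lean document; each statement's English description precedes it below -/
import Mathlib

section
/- The commutator of the effective single-excitation Hamiltonian E with the position operator X satisfies i(E∘X − X∘E) = P, as linear maps on the space of finitely supported complex sequences. -/
open Complex Finsupp

/-- The position operator `X` on the space of finitely supported complex sequences:
`X δ_l = (l+1) δ_l`. -/
noncomputable def Xop : (ℕ →₀ ℂ) →ₗ[ℂ] (ℕ →₀ ℂ) :=
  Finsupp.linearCombination ℂ fun l : ℕ => ((l : ℂ) + 1) • Finsupp.single l 1

/-- The effective single-excitation Hamiltonian `E`: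
`E δ_l = i (l+1) δ_{l+1} - i l δ_{l-1}` (the second term vanishing for `l = 0`). -/
noncomputable def Eop : (ℕ →₀ ℂ) →ₗ[ℂ] (ℕ →₀ ℂ) :=
  Finsupp.linearCombination ℂ fun l : ℕ =>
    (Complex.I * ((l : ℂ) + 1)) • Finsupp.single (l + 1) 1
      - (Complex.I * (l : ℂ)) • Finsupp.single (l - 1) 1

/-- The momentum-type operator `P`:
`P δ_l = (l+1) δ_{l+1} + l δ_{l-1}` (the second term vanishing for `l = 0`). -/
noncomputable def Pop : (ℕ →₀ ℂ) →ₗ[ℂ] (ℕ →₀ ℂ) :=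
  Finsupp.linearCombination ℂ fun l : ℕ =>
    ((l : ℂ) + 1) • Finsupp.single (l + 1) 1 + (l : ℂ) • Finsupp.single (l - 1) 1

lemma Xop_single (l : ℕ) (c : ℂ) :
    Xop (single l c) = single l (((l : ℂ) + 1) * c) := by
  simp only [Xop, linearCombination_single, smul_single, smul_eq_mul, mul_one]
  ring_nf

lemma Eop_single (l : ℕ) (c : ℂ) :
    Eop (single l c) = single (l + 1) (I * ((l : ℂ) + 1) * c) - single (l - 1) (I * l * c) := by
  simp only [Eop, linearCombination_single, smul_sub, smul_single, smul_eq_mul, mul_one]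
  ring_nf

lemma Pop_single (l : ℕ) (c : ℂ) :
    Pop (single l c) = single (l + 1) (((l : ℂ) + 1) * c) + single (l - 1) ((l : ℂ) * c) := by
  simp only [Pop, linearCombination_single, smul_add, smul_single, smul_eq_mul, mul_one]
  ring_nf

/-- Truncated subtraction: for `l = 0` the left factor is `1`, not `0`, but then `l` vanishes. -/
lemma cast_sub_one_add_one_mul_self (l : ℕ) : (((l - 1 : ℕ) : ℂ) + 1) * l = l * l := by
  cases l <;> simp

lemma Eop_comp_Xop_sub_Xop_comp_Eop : Eop ∘ₗ Xop - Xop ∘ₗ Eop = (-I) • Pop := by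
  refine lhom_ext fun l c => ?_
  have hlower : (((l - 1 : ℕ) : ℂ) + 1) * (I * l * c) = I * l * (l * c) := by
    linear_combination I * c * cast_sub_one_add_one_mul_self l
  simp only [LinearMap.sub_apply, LinearMap.comp_apply, LinearMap.smul_apply, Xop_single,
    Eop_single, Pop_single, map_sub, hlower, smul_add, smul_single, smul_eq_mul]
  rw [sub_sub_sub_comm, ← single_sub, ← single_sub, sub_eq_add_neg, ← single_neg]
  congr 2 <;> push_cast <;> ring

/-- `i [E, X] = P` as linear maps on finitely supported complex sequences. -/
theorem commutator_E_X : Complex.I • (Eop ∘ₗ Xop - Xop ∘ₗ Eop) = Pop := by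
  rw [Eop_comp_Xop_sub_Xop_comp_Eop, smul_smul, mul_neg, I_mul_I, neg_neg, one_smul]
end

section
/- The commutator of the effective single-excitation Hamiltonian E with the operator P satisfies i(E∘P − P∘E) = 4X − 2·id, as linear maps on the space of finitely supported complex sequences. -/
open Complex Finsupp

/-! With the ladder operators `A δ_l = (l+1) δ_{l+1}` and `B δ_l = l δ_{l-1}` we have
`E = i (A - B)` and `P = A + B`, so `i [E, P] = 2 [B, A]`; and `[B, A] δ_l = ((l+1)² - l²) δ_l`
is `2 X - id`. -/

open Finsupp

theorem I_smul_commutator_sub_add {A : Type*} [Ring A] [Algebra ℂ A] (a b : A) :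
    I • ((I • (a - b)) * (a + b) - (a + b) * (I • (a - b))) = (2 : ℂ) • (b * a - a * b) := by
  rw [smul_mul_assoc, mul_smul_comm, ← smul_sub, smul_smul, I_mul_I, neg_one_smul, two_smul]
  noncomm_ring

section Ladder

variable (R : Type*) [CommSemiring R]

noncomputable def raiseOp : (ℕ →₀ R) →ₗ[R] (ℕ →₀ R) :=
  linearCombination R fun l => single (l + 1) ((l : R) + 1)

noncomputable def lowerOp : (ℕ →₀ R) →ₗ[R] (ℕ →₀ R) :=
  linearCombination R fun l => single (l - 1) (l : R)

variable {R}

theorem raiseOp_single (l : ℕ) (c : R) :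
    raiseOp R (single l c) = single (l + 1) (c * ((l : R) + 1)) := by
  rw [raiseOp, linearCombination_single, smul_single, smul_eq_mul]

theorem lowerOp_single (l : ℕ) (c : R) : lowerOp R (single l c) = single (l - 1) (c * l) := by
  rw [lowerOp, linearCombination_single, smul_single, smul_eq_mul]

theorem lowerOp_raiseOp_single (l : ℕ) (c : R) :
    lowerOp R (raiseOp R (single l c)) = single l (c * ((l : R) + 1) ^ 2) := by
  rw [raiseOp_single, lowerOp_single, Nat.add_sub_cancel, Nat.cast_succ, mul_assoc, sq]

theorem raiseOp_lowerOp_single (l : ℕ) (c : R) :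
    raiseOp R (lowerOp R (single l c)) = single l (c * (l : R) ^ 2) := by
  cases l with
  | zero => simp only [lowerOp_single, Nat.cast_zero, mul_zero, single_zero, map_zero, sq]
  | succ n =>
    rw [lowerOp_single, raiseOp_single, Nat.add_sub_cancel, ← Nat.cast_succ, mul_assoc, sq]

end Ladder

theorem Eop_eq_I_smul_raiseOp_sub_lowerOp : Eop = I • (raiseOp ℂ - lowerOp ℂ) := by
  refine lhom_ext fun l c => ?_
  simp only [Eop, linearCombination_single, LinearMap.smul_apply, LinearMap.sub_apply,
    raiseOp_single, lowerOp_single, smul_sub, smul_single, smul_eq_mul, mul_one]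
  congr 2 <;> ring

theorem Pop_eq_raiseOp_add_lowerOp : Pop = raiseOp ℂ + lowerOp ℂ := by
  refine lhom_ext fun l c => ?_
  simp only [Pop, linearCombination_single, LinearMap.add_apply, raiseOp_single, lowerOp_single,
    smul_add, smul_single, smul_eq_mul, mul_one]

theorem lowerOp_comp_raiseOp_sub_raiseOp_comp_lowerOp :
    lowerOp ℂ ∘ₗ raiseOp ℂ - raiseOp ℂ ∘ₗ lowerOp ℂ = (2 : ℂ) • Xop - LinearMap.id := by
  refine lhom_ext fun l c => ?_
  simp only [LinearMap.sub_apply, LinearMap.comp_apply, LinearMap.smul_apply, LinearMap.id_apply,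
    lowerOp_raiseOp_single, raiseOp_lowerOp_single, Xop, linearCombination_single, smul_single,
    smul_eq_mul, mul_one, ← single_sub]
  congr 1
  ring

/-- `i [E, P] = 4 X - 2 id` as linear maps on finitely supported complex sequences. -/
theorem commutator_E_P :
    Complex.I • (Eop ∘ₗ Pop - Pop ∘ₗ Eop) = (4 : ℂ) • Xop - (2 : ℂ) • LinearMap.id := by
  rw [Eop_eq_I_smul_raiseOp_sub_lowerOp, Pop_eq_raiseOp_add_lowerOp]
  calc _ = (2 : ℂ) • (lowerOp ℂ ∘ₗ raiseOp ℂ - raiseOp ℂ ∘ₗ lowerOp ℂ) :=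
        I_smul_commutator_sub_add (raiseOp ℂ) (lowerOp ℂ)
    _ = (4 : ℂ) • Xop - (2 : ℂ) • LinearMap.id := by
      rw [lowerOp_comp_raiseOp_sub_raiseOp_comp_lowerOp]
      module
end

section
/- For every integer M ≥ 1, the vector y* = (y₁, y₂, y₃) with y₁ = −2(1+M)/M³, y₂ = 1/M⁴, y₃ = (1+M)²/M² − 1 is a feasible solution of the dual linear program: for every integer j ≥ 1 one has j·y₁ + j²·y₂ + y₃ + χ(j > M) ≥ 0, where χ(j > M) equals 1 if j > M and 0 otherwise. -/
/-! Completing the square, the dual slack at `x` equals `(x - M(M+1))² / M⁴ - 1`. The square is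
nonnegative, which suffices when the indicator contributes `1`; for `x ≤ M` one has
`M(M+1) - x ≥ M² ≥ 0`, so the square is at least `M⁴`. -/

lemma dual_slack_eq_sq_div_sub_one {m : ℝ} (hm : m ≠ 0) (x : ℝ) :
    x * (-2 * (1 + m) / m ^ 3) + x ^ 2 * (1 / m ^ 4) + ((1 + m) ^ 2 / m ^ 2 - 1)
      = (x - m * (1 + m)) ^ 2 / m ^ 4 - 1 := by
  field_simp
  ring

lemma one_le_sq_sub_div_of_le {m x : ℝ} (hm : 0 < m) (hx : x ≤ m) :
    1 ≤ (x - m * (1 + m)) ^ 2 / m ^ 4 := by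
  have hsq : (m ^ 2) ^ 2 ≤ (x - m * (1 + m)) ^ 2 := by
    rw [← neg_sub, neg_sq]
    exact pow_le_pow_left₀ (by positivity) (by nlinarith) 2
  rw [one_le_div (by positivity)]
  linarith [hsq]

theorem dual_feasible_general (M : ℕ) (hM : 1 ≤ M) (j : ℕ) :
    (j : ℝ) * (-2 * (1 + (M : ℝ)) / (M : ℝ) ^ 3)
      + (j : ℝ) ^ 2 * (1 / (M : ℝ) ^ 4)
      + ((1 + (M : ℝ)) ^ 2 / (M : ℝ) ^ 2 - 1)
      + (if M < j then (1 : ℝ) else 0) ≥ 0 := by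
  have hM0 : (0 : ℝ) < M := by exact_mod_cast hM
  rw [dual_slack_eq_sq_div_sub_one hM0.ne']
  split_ifs with hjM
  · have : 0 ≤ ((j : ℝ) - M * (1 + M)) ^ 2 / (M : ℝ) ^ 4 := by positivity
    linarith
  · have hjM' : (j : ℝ) ≤ M := by exact_mod_cast not_lt.mp hjM
    linarith [one_le_sq_sub_div_of_le hM0 hjM']

/-- Dual feasibility: for every integer `M ≥ 1`, the dual vector
`y₁ = -2(1+M)/M³`, `y₂ = 1/M⁴`, `y₃ = (1+M)²/M² - 1` satisfies
`j y₁ + j² y₂ + y₃ + χ(j > M) ≥ 0` for every integer `j ≥ 1`. -/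
theorem dual_feasible (M : ℕ) (hM : 1 ≤ M) (j : ℕ) (hj : 1 ≤ j) :
    (j : ℝ) * (-2 * (1 + (M : ℝ)) / (M : ℝ) ^ 3)
      + (j : ℝ) ^ 2 * (1 / (M : ℝ) ^ 4)
      + ((1 + (M : ℝ)) ^ 2 / (M : ℝ) ^ 2 - 1)
      + (if M < j then (1 : ℝ) else 0) ≥ 0 :=
  dual_feasible_general M hM j
end

section
/- Let M ≥ 1 be an integer and let (q_j)_{j≥1} be nonnegative reals with Σ_{j=1}^∞ q_j = 1 such that the series Σ_{j=1}^∞ j·q_j and Σ_{j=1}^∞ j²·q_j converge, with sums a and b respectively. Then the tail probability satisfies Σ_{j=M+1}^∞ q_j ≥ 2a(1+M)/M³ − b/M⁴ − (1+M)²/M² + 1. -/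
/-!
Weak duality for the moment linear program. The quadratic
`w(x) = 2(1+M)x/M³ - x²/M⁴ + 1 - (1+M)²/M²` equals `1 - (x - M - M²)²/M⁴`, so it is at most `1`
everywhere and at most `0` for `x ≤ M`. Hence `Σ_j w(j) q_j` — which the moment conditions
evaluate to the right-hand side — is bounded by the tail mass `Σ_{j>M} q_j`.
-/

theorem le_tsum_nat_add_of_hasSum_mul {p w : ℕ → ℝ} {s : ℝ} (M : ℕ) (hp : ∀ j, 0 ≤ p j)
    (hps : Summable p) (hw : HasSum (fun j => w j * p j) s)
    (hhead : ∀ j < M, w j ≤ 0) (htail : ∀ j, w (j + M) ≤ 1) :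
    s ≤ ∑' j, p (j + M) := by
  have hsplit := hw.summable.sum_add_tsum_nat_add M
  rw [hw.tsum_eq] at hsplit
  have hhead_sum : ∑ j ∈ Finset.range M, w j * p j ≤ 0 :=
    Finset.sum_nonpos fun j hj =>
      mul_nonpos_of_nonpos_of_nonneg (hhead j (Finset.mem_range.mp hj)) (hp j)
  have htail_sum : ∑' j, w (j + M) * p (j + M) ≤ ∑' j, p (j + M) :=
    Summable.tsum_le_tsum (fun j => mul_le_of_le_one_left (hp _) (htail j))
      ((summable_nat_add_iff M).mpr hw.summable) ((summable_nat_add_iff M).mpr hps)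
  linarith

/-- The optimal dual point `y₁ = -2(1+M)/M³`, `y₂ = 1/M⁴`, `y₃ = (1+M)²/M² - 1`, read as the
weight `-(y₁ x + y₂ x² + y₃)` of the atom `x`. -/
noncomputable def dualWeight (M x : ℝ) : ℝ :=
  2 * (1 + M) / M ^ 3 * x - x ^ 2 / M ^ 4 + (1 - (1 + M) ^ 2 / M ^ 2)

theorem dualWeight_eq {M : ℝ} (hM : M ≠ 0) (x : ℝ) :
    dualWeight M x = 1 - (x - M - M ^ 2) ^ 2 / M ^ 4 := by
  unfold dualWeight
  field_simp
  ring

theorem dualWeight_le_one {M : ℝ} (hM : M ≠ 0) (x : ℝ) : dualWeight M x ≤ 1 := by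
  rw [dualWeight_eq hM]
  have : 0 ≤ (x - M - M ^ 2) ^ 2 / M ^ 4 := by positivity
  linarith

theorem dualWeight_nonpos {M x : ℝ} (hM : 0 < M) (hx : x ≤ M) : dualWeight M x ≤ 0 := by
  rw [dualWeight_eq hM.ne', sub_nonpos, one_le_div (by positivity)]
  nlinarith

/-- Weak-duality lower bound on the tail of a probability distribution on the positive
integers with prescribed first moment `a` and second moment `b`:
`Σ_{j=M+1}^∞ q_j ≥ 2a(1+M)/M³ - b/M⁴ - (1+M)²/M² + 1`. Here `q (j)` for `j ≥ 1`
are the probabilities, encoded as a function on `ℕ` evaluated at `j + 1`. -/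
theorem tail_lower_bound (M : ℕ) (hM : 1 ≤ M) (q : ℕ → ℝ) (a b : ℝ)
    (hq : ∀ j : ℕ, 1 ≤ j → 0 ≤ q j)
    (hnorm : HasSum (fun j : ℕ => q (j + 1)) 1)
    (hfirst : HasSum (fun j : ℕ => ((j : ℝ) + 1) * q (j + 1)) a)
    (hsecond : HasSum (fun j : ℕ => ((j : ℝ) + 1) ^ 2 * q (j + 1)) b) :
    (∑' j : ℕ, q (M + 1 + j)) ≥
      2 * a * (1 + (M : ℝ)) / (M : ℝ) ^ 3 - b / (M : ℝ) ^ 4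
        - (1 + (M : ℝ)) ^ 2 / (M : ℝ) ^ 2 + 1 := by
  have hM0 : (0 : ℝ) < M := by exact_mod_cast hM
  have hdual := (((hfirst.mul_left (2 * (1 + (M : ℝ)) / (M : ℝ) ^ 3)).sub
      (hsecond.div_const ((M : ℝ) ^ 4))).add
      (hnorm.mul_left (1 - (1 + (M : ℝ)) ^ 2 / (M : ℝ) ^ 2))).congr_fun
    (g := fun j : ℕ => dualWeight M (j + 1) * q (j + 1)) fun j => by unfold dualWeight; ring
  have hbound := le_tsum_nat_add_of_hasSum_mul M (fun j => hq (j + 1) (Nat.le_add_left 1 j))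
    hnorm.summable hdual
    (fun j hj => dualWeight_nonpos hM0 (by exact_mod_cast hj))
    (fun j => dualWeight_le_one hM0.ne' _)
  refine (Eq.le ?_).trans (hbound.trans_eq (tsum_congr fun j => congrArg q ?_))
  · ring
  · ring
end

section
/- Define a(t) = (1 + cosh(2t))/2, b(t) = cosh²(t)·cosh(2t), and g(M) = 2·a(log M)·(1+M)/M³ − b(log M)/M⁴ − (1+M)²/M² + 1 for real M > 0. Then g(M) > 1/5 for every real M ≥ 9. -/
/-!
With `t = log M` we have `cosh t = (M + M⁻¹)/2` and `cosh (2t) = (M² + M⁻²)/2`, so `g` is a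
rational function of `M`, and `g M - 1/5 = P M / (40 M⁸)` for an explicit octic `P`.
Its two leading terms give `M⁷ (7M - 60)`, which dominates the remaining negative terms once
`M ≥ 9`.
-/

open Real

lemma Real.cosh_two_mul_log {x : ℝ} (hx : 0 < x) :
    cosh (2 * log x) = (x ^ 2 + (x ^ 2)⁻¹) / 2 := by
  rw [← Real.log_rpow hx, Real.cosh_log (by positivity)]
  norm_cast

lemma weakDualityBound_sub_one_fifth {M : ℝ} (hM : M ≠ 0) :
    2 * ((1 + (M ^ 2 + (M ^ 2)⁻¹) / 2) / 2) * (1 + M) / M ^ 3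
      - ((M + M⁻¹) / 2) ^ 2 * ((M ^ 2 + (M ^ 2)⁻¹) / 2) / M ^ 4 - (1 + M) ^ 2 / M ^ 2 + 1
      - 1 / 5
    = (7 * M ^ 8 - 60 * M ^ 7 - 10 * M ^ 6 + 40 * M ^ 5 + 10 * M ^ 4 + 20 * M ^ 3
        - 10 * M ^ 2 - 5) / (40 * M ^ 8) := by
  field_simp
  ring

lemma weakDualityOctic_pos {M : ℝ} (hM : 9 ≤ M) :
    0 < 7 * M ^ 8 - 60 * M ^ 7 - 10 * M ^ 6 + 40 * M ^ 5 + 10 * M ^ 4 + 20 * M ^ 3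
      - 10 * M ^ 2 - 5 := by
  have hM1 : 1 ≤ M := by linarith
  have hlead : 10 < M * (7 * M - 60) := by nlinarith
  have hM6 : 0 < M ^ 6 := by positivity
  have hM2 : 1 ≤ M ^ 2 := one_le_pow₀ hM1
  have hM3 : M ^ 2 ≤ M ^ 3 := pow_le_pow_right₀ hM1 (by norm_num)
  have hM5 : M ^ 2 ≤ M ^ 5 := pow_le_pow_right₀ hM1 (by norm_num)
  have hsplit : 7 * M ^ 8 - 60 * M ^ 7 - 10 * M ^ 6 + 40 * M ^ 5 + 10 * M ^ 4 + 20 * M ^ 3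
      - 10 * M ^ 2 - 5
      = M ^ 6 * (M * (7 * M - 60) - 10) + 10 * M ^ 4 + 40 * M ^ 5 + 20 * M ^ 3
        - 10 * M ^ 2 - 5 := by ring
  rw [hsplit]
  nlinarith [mul_pos hM6 (sub_pos.2 hlead), pow_pos (by linarith : (0 : ℝ) < M) 4]

/-- The weak-duality bound function
`g(M) = 2 a(log M)(1+M)/M³ - b(log M)/M⁴ - (1+M)²/M² + 1`, with
`a(t) = (1 + cosh(2t))/2` and `b(t) = cosh²(t) cosh(2t)`, satisfies `g(M) > 1/5`
for every real `M ≥ 9`. -/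
theorem g_gt_one_fifth
    (a b : ℝ → ℝ) (ha : ∀ t, a t = (1 + Real.cosh (2 * t)) / 2)
    (hb : ∀ t, b t = Real.cosh t ^ 2 * Real.cosh (2 * t))
    (g : ℝ → ℝ)
    (hg : ∀ M : ℝ, 0 < M → g M = 2 * a (Real.log M) * (1 + M) / M ^ 3
      - b (Real.log M) / M ^ 4 - (1 + M) ^ 2 / M ^ 2 + 1)
    (M : ℝ) (hM : 9 ≤ M) :
    g M > 1 / 5 := by
  have hM0 : 0 < M := by linarith
  rw [hg M hM0, ha, hb, cosh_log hM0, cosh_two_mul_log hM0]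
  have hdiff := weakDualityBound_sub_one_fifth hM0.ne'
  have hpos := div_pos (weakDualityOctic_pos hM) (by positivity : (0 : ℝ) < 40 * M ^ 8)
  linarith
end

section
/- Let M ≥ 9 be an integer and let (q_j)_{j≥1} be nonnegative reals with Σ_{j=1}^∞ q_j = 1, Σ_{j=1}^∞ j·q_j = (1 + cosh(2·log M))/2 and Σ_{j=1}^∞ j²·q_j = cosh²(log M)·cosh(2·log M) (both series convergent). Then Σ_{j=M+1}^∞ q_j > 1/5. In words: any probability distribution on the positive integers whose first and second moments equal the moments of the position of the single excitation at time t* = log M must place probability exceeding 1/5 beyond site M, so after a time only logarithmic in the distance a signal of constant strength has reached the distant region. -/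
open Finset Real

/-!
A Chebyshev bound about the point `v = 7M²/10`: for `j ≤ M < v` we have `(j - v)² ≥ (v - M)²`,
so the mass on `{1, …, M}` is at most `E[(X - v)²] / (v - M)²`, and `E[(X - v)²] = b - 2va + v²`
is determined by the two prescribed moments. With `a, b` evaluated at `t = log M`, where
`cosh t = (M + M⁻¹)/2`, this ratio is below `4/5` as soon as `M ≥ 9`.
-/

theorem one_sub_le_tsum_nat_add_of_le_weight {p w : ℕ → ℝ} {N : ℕ} {S : ℝ}
    (hp : HasSum p 1) (hwp : HasSum (fun j => w j * p j) S)
    (hnonneg : ∀ j, 0 ≤ w j * p j) (hle : ∀ j < N, p j ≤ w j * p j) :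
    1 - S ≤ ∑' j, p (j + N) := by
  rw [((hasSum_nat_add_iff' N).2 hp).tsum_eq]
  have hhead : ∑ j ∈ range N, p j ≤ ∑ j ∈ range N, w j * p j :=
    sum_le_sum fun j hj => hle j (mem_range.1 hj)
  linarith [sum_le_hasSum (range N) (fun j _ => hnonneg j) hwp]

theorem one_sub_div_sq_le_tsum_nat_add {p x : ℕ → ℝ} {N : ℕ} {c v S : ℝ}
    (hp0 : ∀ j, 0 ≤ p j) (hp : HasSum p 1) (hS : HasSum (fun j => (x j - v) ^ 2 * p j) S)
    (hcv : c < v) (hx : ∀ j < N, x j ≤ c) :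
    1 - S / (v - c) ^ 2 ≤ ∑' j, p (j + N) := by
  have hD : 0 < (v - c) ^ 2 := by nlinarith
  refine one_sub_le_tsum_nat_add_of_le_weight (w := fun j => (x j - v) ^ 2 / (v - c) ^ 2) hp
    (by simpa only [div_mul_eq_mul_div] using hS.div_const _)
    (fun j => by have := hp0 j; positivity) fun j hj => le_mul_of_one_le_left (hp0 j) ?_
  rw [one_le_div hD]
  nlinarith [hx j hj]

theorem hasSum_sq_sub_mul {p x : ℕ → ℝ} {A B : ℝ} (v : ℝ) (hp : HasSum p 1)
    (hA : HasSum (fun j => x j * p j) A) (hB : HasSum (fun j => x j ^ 2 * p j) B) :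
    HasSum (fun j => (x j - v) ^ 2 * p j) (B - 2 * v * A + v ^ 2) := by
  have h := (hB.sub (hA.mul_left (2 * v))).add (hp.mul_left (v ^ 2))
  rw [mul_one] at h
  have hterm : (fun j => (x j - v) ^ 2 * p j)
      = fun j => x j ^ 2 * p j - 2 * v * (x j * p j) + v ^ 2 * p j := by
    funext j; ring
  rwa [hterm]

theorem second_moment_div_sq_lt_four_fifths {m : ℝ} (hm : 9 ≤ m) :
    (cosh (log m) ^ 2 * cosh (2 * log m) - 2 * (7 * m ^ 2 / 10) * ((1 + cosh (2 * log m)) / 2)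
      + (7 * m ^ 2 / 10) ^ 2) / (7 * m ^ 2 / 10 - m) ^ 2 < 4 / 5 := by
  have hm0 : 0 < m := by linarith
  have hlog : 2 * log m = log (m ^ 2) := by rw [log_pow]; norm_num
  rw [hlog, cosh_log hm0, cosh_log (by positivity), ← inv_pow,
    div_lt_iff₀ (pow_pos (by nlinarith) 2)]
  set u := m⁻¹
  have hmu : m * u = 1 := mul_inv_cancel₀ hm0.ne'
  have hu0 : 0 < u := by positivity
  have hu1 : u ≤ 1 := inv_le_one_of_one_le₀ (by linarith)
  have hexp : 4 / 5 * (7 * m ^ 2 / 10 - m) ^ 2 - (((m + u) / 2) ^ 2 * ((m ^ 2 + u ^ 2) / 2)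
      - 2 * (7 * m ^ 2 / 10) * ((1 + (m ^ 2 + u ^ 2) / 2) / 2) + (7 * m ^ 2 / 10) ^ 2)
      = (127 / 200 * m ^ 4 - 28 / 5 * m ^ 3 + 25 / 4 * m ^ 2 + 1 / 2 - 5 / 4 * u ^ 2
        - 5 / 8 * u ^ 4) / 5 := by
    -- the cross terms `m * u` collapse via `m * u = 1`; for `m ≥ 9` the quartic term wins
    linear_combination (1 / 2 - 5 / 4 * u ^ 2 + 1 / 2 * (m * u) - 5 / 4 * m ^ 2) / 5 * hmu
  have hu2 : u ^ 2 ≤ 1 := pow_le_one₀ hu0.le hu1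
  have hu4 : u ^ 4 ≤ 1 := pow_le_one₀ hu0.le hu1
  nlinarith [mul_nonneg (mul_nonneg (sub_nonneg.2 hm) hm0.le) hm0.le]

/-- Constant-strength signal after logarithmic time: any probability distribution
`(q_j)_{j ≥ 1}` on the positive integers whose first and second moments equal the
moments `a(log M) = (1 + cosh(2 log M))/2` and `b(log M) = cosh²(log M) cosh(2 log M)`
of the position of the single excitation at time `t* = log M` must place probability
exceeding `1/5` beyond site `M`, for every integer `M ≥ 9`. -/
theorem constant_signal_after_log_time (M : ℕ) (hM : 9 ≤ M) (q : ℕ → ℝ)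
    (hq : ∀ j : ℕ, 1 ≤ j → 0 ≤ q j)
    (hnorm : HasSum (fun j : ℕ => q (j + 1)) 1)
    (hfirst : HasSum (fun j : ℕ => ((j : ℝ) + 1) * q (j + 1))
      ((1 + Real.cosh (2 * Real.log M)) / 2))
    (hsecond : HasSum (fun j : ℕ => ((j : ℝ) + 1) ^ 2 * q (j + 1))
      (Real.cosh (Real.log M) ^ 2 * Real.cosh (2 * Real.log M))) :
    (∑' j : ℕ, q (M + 1 + j)) > 1 / 5 := by
  have hm : (9 : ℝ) ≤ M := by exact_mod_cast hM
  have htail := one_sub_div_sq_le_tsum_nat_add (N := M) (c := M)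
    (fun j => hq (j + 1) j.succ_pos) hnorm
    (hasSum_sq_sub_mul (7 * M ^ 2 / 10) hnorm hfirst hsecond)
    (by nlinarith) (fun j hj => by exact_mod_cast hj)
  have hratio := second_moment_div_sq_lt_four_fifths hm
  simp only [add_comm (M + 1), ← add_assoc]
  linarith
end
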